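/- Let (Q,ρ,[·,·]) be a skew-symmetric dull algebroid in algebraic form over a commutative unital ℝ-algebra R and let ∇ be a linear connection on Q. Then the basic curvature evaluated on the anchor differs from the curvature of the basic connection on Q exactly by the Jacobiator: R^{bas}_∇(q₁,q₂)(ρ(q₃)) + Jac(q₁,q₂,q₃) = ∇^{bas,Q}_{q₁}∇^{bas,Q}_{q₂}q₃ − ∇^{bas,Q}_{q₂}∇^{bas,Q}_{q₁}q₃ − ∇^{bas,Q}_{[q₁,q₂]}q₃ for all q₁,q₂,q₃ ∈ Q. -/
import Mathlib


/-
STATEMENT 7: For a skew-symmetric dull algebroid (Q, ρ, [·,·]) in algebraic form over a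
commutative unital ℝ-algebra R with a linear connection ∇ on Q, the basic curvature
evaluated on the anchor differs from the curvature of the basic connection on Q exactly
by the Jacobiator.
-/

section

variable {R : Type*} [CommRing R] [Algebra ℝ R]
variable {Q : Type*} [AddCommGroup Q] [Module R Q] [Module ℝ Q] [IsScalarTower ℝ R Q]

/-- The basic connection on `Q`: `∇^{bas,Q}_{q₁} q₂ := [q₁,q₂] + ∇_{ρ(q₂)} q₁`. -/
def basQ (br : Q → Q → Q) (ρ : Q →ₗ[R] Derivation ℝ R R)
    (nab : Derivation ℝ R R → Q → Q) (q₁ q₂ : Q) : Q :=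
  br q₁ q₂ + nab (ρ q₂) q₁

/-- The basic connection on `𝔛(R)`: `∇^{bas,𝔛}_{q} X := ⁅ρ(q), X⁆ + ρ(∇_X q)`. -/
def basX (ρ : Q →ₗ[R] Derivation ℝ R R)
    (nab : Derivation ℝ R R → Q → Q) (q : Q) (X : Derivation ℝ R R) : Derivation ℝ R R :=
  ⁅ρ q, X⁆ + ρ (nab X q)

/-- The basic curvature. -/
def Rbas (br : Q → Q → Q) (ρ : Q →ₗ[R] Derivation ℝ R R)
    (nab : Derivation ℝ R R → Q → Q) (q₁ q₂ : Q) (X : Derivation ℝ R R) : Q :=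
  - nab X (br q₁ q₂) + br q₁ (nab X q₂) + br (nab X q₁) q₂
    + nab (basX ρ nab q₂ X) q₁ - nab (basX ρ nab q₁ X) q₂

/-- The Jacobiator of the bracket. -/
def jac (br : Q → Q → Q) (q₁ q₂ q₃ : Q) : Q :=
  br q₁ (br q₂ q₃) - br (br q₁ q₂) q₃ - br q₂ (br q₁ q₃)

theorem stmt7
    (br : Q → Q → Q) (ρ : Q →ₗ[R] Derivation ℝ R R)
    (hbr_addl : ∀ q₁ q₂ q₃ : Q, br (q₁ + q₂) q₃ = br q₁ q₃ + br q₂ q₃)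
    (hbr_addr : ∀ q₁ q₂ q₃ : Q, br q₁ (q₂ + q₃) = br q₁ q₂ + br q₁ q₃)
    (hbr_smull : ∀ (r : ℝ) (q₁ q₂ : Q), br (r • q₁) q₂ = r • br q₁ q₂)
    (hbr_smulr : ∀ (r : ℝ) (q₁ q₂ : Q), br q₁ (r • q₂) = r • br q₁ q₂)
    (hskew : ∀ q₁ q₂ : Q, br q₁ q₂ = - br q₂ q₁)
    (hanchor : ∀ q₁ q₂ : Q, ρ (br q₁ q₂) = ⁅ρ q₁, ρ q₂⁆)
    (hleib : ∀ (f : R) (q₁ q₂ : Q), br q₁ (f • q₂) = f • br q₁ q₂ + ρ q₁ f • q₂)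
    (nab : Derivation ℝ R R → Q → Q)
    (hnab_addX : ∀ (X Y : Derivation ℝ R R) (q : Q), nab (X + Y) q = nab X q + nab Y q)
    (hnab_addq : ∀ (X : Derivation ℝ R R) (q₁ q₂ : Q), nab X (q₁ + q₂) = nab X q₁ + nab X q₂)
    (hnab_smulX : ∀ (f : R) (X : Derivation ℝ R R) (q : Q), nab (f • X) q = f • nab X q)
    (hnab_leib : ∀ (X : Derivation ℝ R R) (f : R) (q : Q),
      nab X (f • q) = X f • q + f • nab X q) :
    ∀ q₁ q₂ q₃ : Q,
      Rbas br ρ nab q₁ q₂ (ρ q₃) + jac br q₁ q₂ q₃ =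
        basQ br ρ nab q₁ (basQ br ρ nab q₂ q₃) - basQ br ρ nab q₂ (basQ br ρ nab q₁ q₃)
          - basQ br ρ nab (br q₁ q₂) q₃ := by
  intro q₁ q₂ q₃
  simp only [Rbas, jac, basQ, basX, hbr_addr, hnab_addX, map_add, hanchor]
  rw [hskew (nab (ρ q₃) q₁) q₂]
  abel

end
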